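/- Let 𝓔̂_m^v = { θ_i : sup_{x∈ℝ} |F_n^{θ_i}(x) − F_N^{θ₀}(x)| ≤ √((n+N)/(nN)) · √(−(1/2)log(α/2)) } be the two-sample eligibility set constructed from an i.i.d. real sample of size N from F^{θ₀}, independent i.i.d. simulated samples of size n from each F^{θ_i}, and candidates θ₁,…,θ_m. If m = o(N) and n = Ω(N) as N → ∞, then lim_{m,n,N→∞} ℙ( ∃ i ∈ {1,…,m} such that sup_{x∈ℝ} |F^{θ_i}(x) − F^{θ₀}(x)| > √(log m / m) and θ_i ∈ 𝓔̂_m^v ) = 0. -/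

import Mathlib

open MeasureTheory ProbabilityTheory Filter

/-!
Put `ε = √(log m / m)`. For each candidate `i` whose CDF is `ε`-far from `F^{θ₀}`, fix a
deterministic point `xᵢ` with `|F^{θᵢ}(xᵢ) - F^{θ₀}(xᵢ)| > ε`. Since `n ≥ cN` and `m = o(N)`,
the Kolmogorov–Smirnov threshold eventually drops below `ε / 2`, so eligibility of `θᵢ` forces
one of the two empirical CDFs to be `ε / 4`-off at `xᵢ`. At a fixed point the empirical CDF is
an average of i.i.d. Bernoulli variables, so Hoeffding's inequality bounds each of these events
by `2 exp (-2 L (ε / 4)²)` with `L ∈ {n, N}`, which is at most `2 / m²` once `L ≥ 16 m`.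
A union bound over the `m` candidates leaves `4 / m → 0`.
-/

/-- Empirical distribution function of the first `M` terms of a sequence of
real-valued random variables. -/
noncomputable def ecdfSeq {Ω : Type*} (Z : ℕ → Ω → ℝ) (M : ℕ) (ω : Ω) (x : ℝ) : ℝ :=
  (M : ℝ)⁻¹ * ∑ i ∈ Finset.range M, if Z i ω ≤ x then (1 : ℝ) else 0

open Real
open scoped NNReal

lemma measureReal_abs_sum_range_ge_le {Ω : Type*} [MeasurableSpace Ω] {P : Measure Ω}
    {W : ℕ → Ω → ℝ} (hW : iIndepFun W P) {c : ℝ≥0} {K : ℕ}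
    (hsub : ∀ j < K, HasSubgaussianMGF (W j) c P) {t : ℝ} (ht : 0 ≤ t) :
    P.real {ω | t ≤ |∑ j ∈ Finset.range K, W j ω|} ≤ 2 * exp (-t ^ 2 / (2 * K * c)) := by
  have := hW.isProbabilityMeasure
  have hneg : iIndepFun (fun j => -W j) P := hW.comp (fun _ => Neg.neg) fun _ => measurable_neg
  calc P.real {ω | t ≤ |∑ j ∈ Finset.range K, W j ω|}
      ≤ P.real ({ω | t ≤ ∑ j ∈ Finset.range K, W j ω} ∪
          {ω | t ≤ ∑ j ∈ Finset.range K, -W j ω}) := by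
        refine measureReal_mono fun ω hω => ?_
        simpa only [Set.mem_union, Set.mem_ofPred_eq, Finset.sum_neg_distrib] using le_abs.mp hω
    _ ≤ _ := (measureReal_union_le _ _).trans <| by
        rw [two_mul]
        exact add_le_add (HasSubgaussianMGF.measure_sum_range_ge_le_of_iIndepFun hW hsub ht)
          (HasSubgaussianMGF.measure_sum_range_ge_le_of_iIndepFun hneg
            (fun j hj => (hsub j hj).neg) ht)

lemma ecdfSeq_mem_Icc {Ω : Type*} (Z : ℕ → Ω → ℝ) (M : ℕ) (ω : Ω) (x : ℝ) :
    ecdfSeq Z M ω x ∈ Set.Icc (0 : ℝ) 1 := by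
  rw [ecdfSeq, Finset.sum_boole]
  refine ⟨by positivity, inv_mul_le_one_of_le₀ ?_ (Nat.cast_nonneg _)⟩
  exact_mod_cast (Finset.card_filter_le _ _).trans (Finset.card_range M).le

lemma bddAbove_range_abs_ecdfSeq_sub {Ω : Type*} (Z Z' : ℕ → Ω → ℝ) (M M' : ℕ) (ω : Ω) :
    BddAbove (Set.range fun x => |ecdfSeq Z M ω x - ecdfSeq Z' M' ω x|) := by
  refine ⟨1, Set.forall_mem_range.mpr fun x => abs_sub_le_iff.mpr ⟨?_, ?_⟩⟩ <;>
  linarith [(ecdfSeq_mem_Icc Z M ω x).1, (ecdfSeq_mem_Icc Z M ω x).2,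
    (ecdfSeq_mem_Icc Z' M' ω x).1, (ecdfSeq_mem_Icc Z' M' ω x).2]

lemma integral_ite_le_eq_measureReal {Ω : Type*} [MeasurableSpace Ω] {P : Measure Ω}
    {Z : Ω → ℝ} (hZ : Measurable Z) (x : ℝ) :
    ∫ ω, (if Z ω ≤ x then (1 : ℝ) else 0) ∂P = (P.map Z).real (Set.Iic x) := by
  rw [measureReal_def, Measure.map_apply hZ measurableSet_Iic, ← measureReal_def,
    ← integral_indicator_one (hZ measurableSet_Iic)]
  rfl

lemma measureReal_abs_ecdfSeq_sub_ge_le {Ω : Type*} [MeasurableSpace Ω] {P : Measure Ω}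
    [IsProbabilityMeasure P] {Z : ℕ → Ω → ℝ} (hZm : ∀ j, Measurable (Z j))
    (hZ : iIndepFun Z P) {ρ : Measure ℝ} (hρ : ∀ j, P.map (Z j) = ρ) (K : ℕ) (x : ℝ)
    {δ : ℝ} (hδ : 0 ≤ δ) :
    P.real {ω | δ ≤ |ecdfSeq Z K ω x - ρ.real (Set.Iic x)|} ≤ 2 * exp (-2 * K * δ ^ 2) := by
  set p := ρ.real (Set.Iic x)
  set W : ℕ → Ω → ℝ := fun j ω => (if Z j ω ≤ x then 1 else 0) - p
  have hind : iIndepFun W P :=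
    hZ.comp (fun _ y => (if y ≤ x then 1 else 0) - p) fun _ =>
      (Measurable.ite measurableSet_Iic measurable_const measurable_const).sub_const p
  have hsub : ∀ j < K, HasSubgaussianMGF (W j) 4⁻¹ P := fun j _ => by
    have h := hasSubgaussianMGF_of_mem_Icc (μ := P) (a := 0) (b := 1)
      (X := fun ω => if Z j ω ≤ x then (1 : ℝ) else 0)
      ((Measurable.ite measurableSet_Iic measurable_const measurable_const).comp
        (hZm j)).aemeasurable (ae_of_all _ fun ω => by split_ifs <;> simp)
    rwa [integral_ite_le_eq_measureReal (hZm j), hρ, sub_zero, nnnorm_one,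
      div_pow, one_pow, show (2 : ℝ≥0) ^ 2 = 4 by norm_num, one_div] at h
  have hsum : ∀ ω, ∑ j ∈ Finset.range K, W j ω = K * (ecdfSeq Z K ω x - p) := fun ω => by
    rcases K.eq_zero_or_pos with rfl | hK
    · simp
    · simp only [W, ecdfSeq, Finset.sum_sub_distrib, Finset.sum_const, Finset.card_range,
        nsmul_eq_mul]
      field_simp
  calc P.real {ω | δ ≤ |ecdfSeq Z K ω x - p|}
      ≤ P.real {ω | K * δ ≤ |∑ j ∈ Finset.range K, W j ω|} := by
        refine measureReal_mono fun ω hω => ?_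
        simp only [Set.mem_ofPred_eq, hsum, abs_mul, Nat.abs_cast] at hω ⊢
        exact mul_le_mul_of_nonneg_left hω K.cast_nonneg
    _ ≤ 2 * exp (-(K * δ) ^ 2 / (2 * K * ((4 : ℝ≥0)⁻¹ : ℝ≥0))) :=
        measureReal_abs_sum_range_ge_le hind hsub (by positivity)
    _ = 2 * exp (-2 * K * δ ^ 2) := by
        rcases K.eq_zero_or_pos with rfl | hK
        · simp
        · congr 2
          push_cast
          field_simp
          ring

lemma quarter_le_abs_sub_or_quarter_le_abs_sub {a b a' b' ε : ℝ} (h : ε < |a - b|)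
    (h' : |a' - b'| ≤ ε / 2) : ε / 4 ≤ |a' - a| ∨ ε / 4 ≤ |b' - b| := by
  by_contra! hlt
  have := abs_sub_le a a' b
  have := abs_sub_le a' b' b
  rw [abs_sub_comm] at hlt
  linarith [hlt.1, hlt.2]

lemma measureReal_exists_far_eligible_le {Ω : Type*} [MeasurableSpace Ω] (P : Measure Ω)
    [IsProbabilityMeasure P] {μ : Measure ℝ} {ν : ℕ → Measure ℝ}
    {X : ℕ → Ω → ℝ} {Y : ℕ → ℕ → Ω → ℝ}
    (hXm : ∀ k, Measurable (X k)) (hYm : ∀ i j, Measurable (Y i j))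
    (hXind : iIndepFun X P) (hYind : ∀ i, iIndepFun (Y i) P)
    (hX : ∀ k, P.map (X k) = μ) (hY : ∀ i j, P.map (Y i j) = ν i)
    {ε t : ℝ} (hε : 0 ≤ ε) (ht : t ≤ ε / 2) (M K N : ℕ) :
    P.real {ω | ∃ i < M, ε < (⨆ x, |(ν i).real (Set.Iic x) - μ.real (Set.Iic x)|) ∧
        (⨆ x, |ecdfSeq (Y i) K ω x - ecdfSeq X N ω x|) ≤ t} ≤
      M * (2 * exp (-2 * K * (ε / 4) ^ 2) + 2 * exp (-2 * N * (ε / 4) ^ 2)) := by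
  have hwit : ∀ i, ∃ x, ε < (⨆ x, |(ν i).real (Set.Iic x) - μ.real (Set.Iic x)|) →
      ε < |(ν i).real (Set.Iic x) - μ.real (Set.Iic x)| := fun i => by
    by_cases h : ε < ⨆ x, |(ν i).real (Set.Iic x) - μ.real (Set.Iic x)|
    · obtain ⟨x, hx⟩ := exists_lt_of_lt_ciSup h
      exact ⟨x, fun _ => hx⟩
    · exact ⟨0, fun h' => absurd h' h⟩
  choose x hx using hwit
  let A i := {ω | ε / 4 ≤ |ecdfSeq (Y i) K ω (x i) - (ν i).real (Set.Iic (x i))|}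
  let B i := {ω | ε / 4 ≤ |ecdfSeq X N ω (x i) - μ.real (Set.Iic (x i))|}
  calc _ ≤ P.real (⋃ i ∈ Finset.range M, A i ∪ B i) := by
        refine measureReal_mono (fun ω ⟨i, hiM, hfar, hks⟩ =>
          Set.mem_biUnion (Finset.mem_range.mpr hiM) ?_) (measure_ne_top _ _)
        exact quarter_le_abs_sub_or_quarter_le_abs_sub (hx i hfar)
          (((le_ciSup (bddAbove_range_abs_ecdfSeq_sub _ _ _ _ ω) (x i)).trans hks).trans ht)
    _ ≤ ∑ i ∈ Finset.range M, (P.real (A i) + P.real (B i)) :=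
        (measureReal_biUnion_finset_le _ _).trans
          (Finset.sum_le_sum fun i _ => measureReal_union_le _ _)
    _ ≤ ∑ i ∈ Finset.range M,
          (2 * exp (-2 * K * (ε / 4) ^ 2) + 2 * exp (-2 * N * (ε / 4) ^ 2)) :=
        Finset.sum_le_sum fun i _ => add_le_add
          (measureReal_abs_ecdfSeq_sub_ge_le (hYm i) (hYind i) (hY i) K (x i) (by positivity))
          (measureReal_abs_ecdfSeq_sub_ge_le hXm hXind hX N (x i) (by positivity))
    _ = _ := by rw [Finset.sum_const, Finset.card_range, nsmul_eq_mul]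

lemma sqrt_div_mul_le_half_sqrt_log_div {K N M c s : ℝ} (hc : 0 < c) (hN : 0 < N)
    (hK : c * N ≤ K) (hM : 0 < M) (hlog : 1 ≤ log M) (hs : 0 ≤ s)
    (hNM : 4 * (1 + c⁻¹) * s ^ 2 * M ≤ N) :
    √((K + N) / (K * N)) * s ≤ √(log M / M) / 2 := by
  have hK0 : 0 < K := (mul_pos hc hN).trans_le hK
  have hNK : N ≤ c⁻¹ * K := by
    rw [← div_eq_inv_mul, le_div_iff₀ hc]
    linarith
  have key : (K + N) / (K * N) * s ^ 2 ≤ log M / M / 4 :=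
    calc (K + N) / (K * N) * s ^ 2 ≤ (1 + c⁻¹) / N * s ^ 2 := by
          refine mul_le_mul_of_nonneg_right ?_ (sq_nonneg s)
          rw [div_le_div_iff₀ (by positivity) hN]
          nlinarith
      _ ≤ 1 / M / 4 := by
          rw [div_mul_eq_mul_div, div_div, div_le_div_iff₀ hN (by positivity)]
          linarith
      _ ≤ log M / M / 4 := by gcongr
  calc √((K + N) / (K * N)) * s = √((K + N) / (K * N) * s ^ 2) := by
        rw [sqrt_mul' _ (sq_nonneg s), Real.sqrt_sq hs]
    _ ≤ √(log M / M / 4) := sqrt_le_sqrt key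
    _ = √(log M / M) / 2 := by
        rw [sqrt_div' _ (by norm_num : (0 : ℝ) ≤ 4), show (4 : ℝ) = 2 ^ 2 by norm_num,
          Real.sqrt_sq zero_le_two]

lemma exp_neg_two_mul_sq_le_inv_sq {M L : ℝ} (hM : 0 < M) (hlog : 0 ≤ log M)
    (hL : 16 * M ≤ L) : exp (-2 * L * (√(log M / M) / 4) ^ 2) ≤ (M ^ 2)⁻¹ := by
  rw [← exp_log (pow_pos hM 2), ← exp_neg, exp_le_exp, log_pow, div_pow,
    sq_sqrt (by positivity)]
  have h2 : 2 ≤ L / (8 * M) := by rw [le_div_iff₀ (by positivity)]; linarith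
  calc -2 * L * (log M / M / 4 ^ 2) = -(L / (8 * M) * log M) := by field_simp; ring
    _ ≤ -(2 * log M) := by nlinarith
    _ = -(((2 : ℕ) : ℝ) * log M) := by norm_num

lemma eventually_mul_le_of_tendsto_div_zero {m : ℕ → ℕ}
    (hmN : Tendsto (fun N => (m N : ℝ) / N) atTop (nhds 0)) {A : ℝ} (hA : 0 ≤ A) :
    ∀ᶠ N : ℕ in atTop, A * m N ≤ N := by
  filter_upwards [hmN.eventually_lt_const (inv_pos.mpr (by linarith : 0 < A + 1)),
    eventually_gt_atTop 0] with N h hN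
  rw [div_lt_iff₀ (by exact_mod_cast hN), inv_mul_eq_div, lt_div_iff₀ (by linarith)] at h
  nlinarith [(m N).cast_nonneg (α := ℝ)]

theorem stmt_11_general
    {Ω : Type*} [MeasurableSpace Ω] (Pr : Measure Ω) [IsProbabilityMeasure Pr]
    (μ : Measure ℝ)
    (ν : ℕ → Measure ℝ)
    (X : ℕ → Ω → ℝ) (Y : ℕ → ℕ → Ω → ℝ)
    (hXm : ∀ i, Measurable (X i)) (hYm : ∀ i j, Measurable (Y i j))
    (hindep : iIndepFun
      (Sum.elim X (fun p : ℕ × ℕ => Y p.1 p.2)) Pr)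
    (hX : ∀ k, Measure.map (X k) Pr = μ) (hY : ∀ i j, Measure.map (Y i j) Pr = ν i)
    (α : ℝ)
    (m n : ℕ → ℕ)
    (hm : Tendsto m atTop atTop)
    -- `m = o(N)`
    (hmN : Tendsto (fun N => (m N : ℝ) / (N : ℝ)) atTop (nhds 0))
    -- `n = Ω(N)`
    (hnN : ∃ c > (0 : ℝ), ∀ᶠ N : ℕ in atTop, c * (N : ℝ) ≤ (n N : ℝ)) :
    Tendsto (fun N =>
      (Pr {ω | ∃ i < m N,
        Real.sqrt (Real.log (m N) / (m N : ℝ)) <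
          (⨆ x : ℝ, |(ν i (Set.Iic x)).toReal - (μ (Set.Iic x)).toReal|) ∧
        (⨆ x : ℝ, |ecdfSeq (Y i) (n N) ω x - ecdfSeq X N ω x|) ≤
          Real.sqrt (((n N : ℝ) + N) / ((n N : ℝ) * N)) *
            Real.sqrt (-(1 / 2) * Real.log (α / 2))}).toReal)
      atTop (nhds 0) := by
  obtain ⟨c, hc, hcN⟩ := hnN
  set s := √(-(1 / 2) * log (α / 2))
  have hmR : Tendsto (fun N => (m N : ℝ)) atTop atTop := tendsto_natCast_atTop_atTop.comp hm
  have hlogm : ∀ᶠ N in atTop, 1 ≤ log (m N) := (tendsto_log_atTop.comp hmR).eventually_ge_atTop 1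
  refine squeeze_zero' (.of_forall fun _ => ENNReal.toReal_nonneg) ?_
    ((tendsto_const_nhds (x := (4 : ℝ))).div_atTop hmR)
  filter_upwards [hcN, hlogm, eventually_gt_atTop 0,
    eventually_mul_le_of_tendsto_div_zero hmN (by positivity : 0 ≤ 16 / c),
    eventually_mul_le_of_tendsto_div_zero hmN (by norm_num : (0 : ℝ) ≤ 16),
    eventually_mul_le_of_tendsto_div_zero hmN (by positivity : 0 ≤ 4 * (1 + c⁻¹) * s ^ 2)]
    with N hcn hlog hN h16c h16 hks
  have hM : (0 : ℝ) < m N := Nat.cast_pos.mpr <| Nat.pos_of_ne_zero fun h => by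
    norm_num [h] at hlog
  have hKM : 16 * (m N : ℝ) ≤ n N := by
    calc 16 * (m N : ℝ) = c * (16 / c * m N) := by field_simp
      _ ≤ c * N := mul_le_mul_of_nonneg_left h16c hc.le
      _ ≤ n N := hcn
  calc _ ≤ m N * (2 * exp (-2 * n N * (√(log (m N) / m N) / 4) ^ 2) +
        2 * exp (-2 * N * (√(log (m N) / m N) / 4) ^ 2)) :=
        measureReal_exists_far_eligible_le Pr hXm hYm
          (hindep.precomp (g := Sum.inl) Sum.inl_injective)
          (fun i => hindep.precomp (g := fun j => Sum.inr (i, j)) fun _ _ h => by simpa using h)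
          hX hY (sqrt_nonneg _) (sqrt_div_mul_le_half_sqrt_log_div hc (by exact_mod_cast hN) hcn
            hM hlog (sqrt_nonneg _) hks) _ _ _
    _ ≤ m N * (2 * ((m N : ℝ) ^ 2)⁻¹ + 2 * ((m N : ℝ) ^ 2)⁻¹) := by
        gcongr
        · exact exp_neg_two_mul_sq_le_inv_sq hM (by linarith) hKM
        · exact exp_neg_two_mul_sq_le_inv_sq hM (by linarith) h16
    _ = 4 / m N := by field_simp; ring

/-- **Corollary 3.** If `m = o(N)` and `n = Ω(N)`, then the probability that some candidate
`θᵢ` with `sup_x |F^{θᵢ}(x) - F^{θ₀}(x)| > √(log m / m)` lies in the eligibility set `𝓔̂_m^v`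
tends to `0` as `m, n, N → ∞`. -/
theorem stmt_11
    {Ω : Type*} [MeasurableSpace Ω] (Pr : Measure Ω) [IsProbabilityMeasure Pr]
    (μ : Measure ℝ) [IsProbabilityMeasure μ]
    (ν : ℕ → Measure ℝ) [∀ i, IsProbabilityMeasure (ν i)]
    (X : ℕ → Ω → ℝ) (Y : ℕ → ℕ → Ω → ℝ)
    (hXm : ∀ i, Measurable (X i)) (hYm : ∀ i j, Measurable (Y i j))
    (hindep : iIndepFun
      (Sum.elim X (fun p : ℕ × ℕ => Y p.1 p.2)) Pr)
    (hX : ∀ k, Measure.map (X k) Pr = μ) (hY : ∀ i j, Measure.map (Y i j) Pr = ν i)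
    (α : ℝ) (hα : α ∈ Set.Ioo (0 : ℝ) 1)
    (m n : ℕ → ℕ)
    (hm : Tendsto m atTop atTop) (hn : Tendsto n atTop atTop)
    -- `m = o(N)`
    (hmN : Tendsto (fun N => (m N : ℝ) / (N : ℝ)) atTop (nhds 0))
    -- `n = Ω(N)`
    (hnN : ∃ c > (0 : ℝ), ∀ᶠ N : ℕ in atTop, c * (N : ℝ) ≤ (n N : ℝ)) :
    Tendsto (fun N =>
      (Pr {ω | ∃ i < m N,
        Real.sqrt (Real.log (m N) / (m N : ℝ)) <
          (⨆ x : ℝ, |(ν i (Set.Iic x)).toReal - (μ (Set.Iic x)).toReal|) ∧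
        (⨆ x : ℝ, |ecdfSeq (Y i) (n N) ω x - ecdfSeq X N ω x|) ≤
          Real.sqrt (((n N : ℝ) + N) / ((n N : ℝ) * N)) *
            Real.sqrt (-(1 / 2) * Real.log (α / 2))}).toReal)
      atTop (nhds 0) :=
  stmt_11_general Pr μ ν X Y hXm hYm hindep hX hY α m n hm hmN hnN
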